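/- (Multiplication formula, Theorem 3.) Let l ≥ 1 be an odd integer, m ≥ 0 and k ≥ 1 integers, and x a real number. Then E_{m,q}^{(0,k)}(x) = ([l]_q^m / [l]_{−q}^k) · Σ_{i_1,…,i_k = 0}^{l−1} q^{−Σ_{j=2}^{k} (j−1) i_j} (−1)^{i_1+⋯+i_k} E_{m,q^l}^{(0,k)}((x + i_1 + ⋯ + i_k)/l). -/
import Mathlib


open Finset

/-- The q-number `[x]_q = (1 - q^x)/(1 - q)`, with `q^x = exp (x * log q)` (rpow). -/
noncomputable def qNum (q x : ℝ) : ℝ := (1 - q ^ x) / (1 - q)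

/-- `[l]_{-q} = (1 - (-q)^l)/(1 + q)` for a natural number `l`. -/
noncomputable def qNumNeg (q : ℝ) (l : ℕ) : ℝ := (1 - (-q) ^ l) / (1 + q)

/-- The higher-order q-Euler polynomial
`E_{m,q}^{(h,k)}(x) = ((1+q)^k/(1-q)^m) * Σ_{j=0}^m C(m,j) (-1)^j q^{jx} / Π_{i=0}^{k-1} (1 + q^{h+j-i})`. -/
noncomputable def qE (q : ℝ) (h : ℤ) (k m : ℕ) (x : ℝ) : ℝ :=
  ((1 + q) ^ k / (1 - q) ^ m) *
    ∑ j ∈ Finset.range (m + 1),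
      (m.choose j : ℝ) * (-1) ^ j * q ^ ((j : ℝ) * x) /
        ∏ i ∈ Finset.range k, (1 + q ^ ((h : ℝ) + (j : ℝ) - (i : ℝ)))


lemma rpow_sum' {q : ℝ} (hq : 0 < q) {α : Type*} (s : Finset α) (f : α → ℝ) :
    q ^ (∑ a ∈ s, f a) = ∏ a ∈ s, q ^ (f a) := by
  simp [Real.rpow_def_of_pos hq, Finset.mul_sum, Real.exp_sum]

lemma rpow_natpow_mul {q : ℝ} (hq : 0 < q) (l : ℕ) (y : ℝ) :
    ((q ^ l : ℝ)) ^ y = q ^ ((l : ℝ) * y) := by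
  rw [← Real.rpow_natCast q l, ← Real.rpow_mul hq.le]

lemma natpow_rpow {q : ℝ} (hq : 0 < q) (a : ℝ) (n : ℕ) :
    ((q ^ a : ℝ)) ^ n = q ^ (a * (n : ℝ)) := by
  rw [← Real.rpow_natCast (q ^ a) n, ← Real.rpow_mul hq.le]

lemma geom_odd {r : ℝ} (hr : 0 < r) {l : ℕ} (hodd : Odd l) :
    ∑ i : Fin l, (-r) ^ (i : ℕ) = (1 + r ^ l) / (1 + r) := by
  have h : (-r) ≠ 1 := by linarith
  rw [Fin.sum_univ_eq_sum_range, geom_sum_eq h, hodd.neg_pow,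
    div_eq_div_iff (by linarith) (by linarith)]
  ring

lemma qEuler_inner_sum {q : ℝ} (hq : 0 < q) {l : ℕ} (hodd : Odd l) (k : ℕ) (j : ℕ) :
    (∑ i : Fin k → Fin l,
      q ^ (-(∑ t : Fin k, (t : ℝ) * ((i t : ℕ) : ℝ))) * (-1 : ℝ) ^ (∑ t : Fin k, (i t : ℕ)) *
        q ^ ((j : ℝ) * ∑ t : Fin k, ((i t : ℕ) : ℝ)))
    = ∏ t ∈ Finset.range k, ((1 + q ^ (((j:ℝ) - (t:ℝ)) * l)) / (1 + q ^ ((j:ℝ) - (t:ℝ)))) := by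
  have step1 : ∀ i : Fin k → Fin l,
      q ^ (-(∑ t : Fin k, (t : ℝ) * ((i t : ℕ) : ℝ))) * (-1 : ℝ) ^ (∑ t : Fin k, (i t : ℕ)) *
        q ^ ((j : ℝ) * ∑ t : Fin k, ((i t : ℕ) : ℝ))
      = ∏ t : Fin k, (-(q ^ ((j:ℝ) - (t:ℝ)))) ^ ((i t : ℕ)) := by
    intro i
    have e : (-(∑ t : Fin k, (t : ℝ) * ((i t : ℕ) : ℝ))) + (j : ℝ) * ∑ t : Fin k, ((i t : ℕ) : ℝ)
        = ∑ t : Fin k, ((j:ℝ) - (t:ℝ)) * ((i t : ℕ) : ℝ) := by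
      rw [Finset.mul_sum]
      simp only [sub_mul]
      rw [Finset.sum_sub_distrib]
      ring
    calc q ^ (-(∑ t : Fin k, (t : ℝ) * ((i t : ℕ) : ℝ))) * (-1 : ℝ) ^ (∑ t : Fin k, (i t : ℕ)) *
        q ^ ((j : ℝ) * ∑ t : Fin k, ((i t : ℕ) : ℝ))
        = q ^ (∑ t : Fin k, ((j:ℝ) - (t:ℝ)) * ((i t : ℕ) : ℝ)) * (-1 : ℝ) ^ (∑ t : Fin k, (i t : ℕ)) := by
          rw [← e, Real.rpow_add hq]; ring
      _ = (∏ t : Fin k, q ^ (((j:ℝ) - (t:ℝ)) * ((i t : ℕ) : ℝ))) *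
            ∏ t : Fin k, (-1 : ℝ) ^ ((i t : ℕ)) := by
          rw [rpow_sum' hq, Finset.prod_pow_eq_pow_sum]
      _ = ∏ t : Fin k, (-(q ^ ((j:ℝ) - (t:ℝ)))) ^ ((i t : ℕ)) := by
          rw [← Finset.prod_mul_distrib]
          refine Finset.prod_congr rfl fun t _ => ?_
          rw [neg_pow (q ^ ((j:ℝ) - (t:ℝ))), natpow_rpow hq]; ring
  simp only [step1]
  have hps := Finset.prod_univ_sum (fun _ : Fin k => (univ : Finset (Fin l)))
    (fun t v => (-(q ^ ((j:ℝ) - (t:ℝ)))) ^ (v : ℕ))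
  rw [Fintype.piFinset_univ] at hps
  rw [← hps, ← Fin.prod_univ_eq_prod_range]
  refine Finset.prod_congr rfl fun t _ => ?_
  rw [geom_odd (Real.rpow_pos_of_pos hq _) hodd, natpow_rpow hq]
theorem stmt_2 (q : ℝ) (hq : 0 < q) (hq1 : q ≠ 1) (l : ℕ) (hl : 1 ≤ l) (hodd : Odd l)
    (m k : ℕ) (hk : 1 ≤ k) (x : ℝ) :
    qE q 0 k m x =
      (qNum q l ^ m / qNumNeg q l ^ k) *
        ∑ i : Fin k → Fin l,
          q ^ (-(∑ j : Fin k, (j : ℝ) * ((i j : ℕ) : ℝ))) *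
            (-1 : ℝ) ^ (∑ j : Fin k, (i j : ℕ)) *
            qE (q ^ l) 0 k m ((x + ∑ j : Fin k, ((i j : ℕ) : ℝ)) / l) := by
  have h1q : (1:ℝ) - q ≠ 0 := sub_ne_zero.mpr hq1.symm
  have h1q' : (0:ℝ) < 1 + q := by linarith
  have hlne : l ≠ 0 := by omega
  have hlR : (l:ℝ) ≠ 0 := Nat.cast_ne_zero.mpr hlne
  have hqlpos : (0:ℝ) < q ^ l := pow_pos hq l
  have hql1 : (q:ℝ) ^ l ≠ 1 := by
    rcases lt_or_gt_of_ne hq1 with h | h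
    · exact ne_of_lt (pow_lt_one₀ hq.le h hlne)
    · exact ne_of_gt (one_lt_pow₀ h hlne)
  have h1ql : (1:ℝ) - q ^ l ≠ 0 := sub_ne_zero.mpr (Ne.symm hql1)
  have h1ql' : (0:ℝ) < 1 + q ^ l := by linarith
  have hDpos : ∀ a : ℝ, (0:ℝ) < 1 + q ^ a := fun a => by positivity
  -- rewrite the inner qE at shifted argument
  have hqE : ∀ S : ℝ, qE (q ^ l) 0 k m ((x + S) / l)
      = ((1 + q ^ l) ^ k / (1 - q ^ l) ^ m) *
        ∑ j ∈ Finset.range (m+1),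
          (m.choose j : ℝ) * (-1:ℝ) ^ j * (q ^ ((j:ℝ)*x) * q ^ ((j:ℝ)*S)) /
            ∏ t ∈ Finset.range k, (1 + q ^ (((j:ℝ) - (t:ℝ)) * l)) := by
    intro S
    rw [qE]
    congr 1
    refine Finset.sum_congr rfl fun j _ => ?_
    rw [rpow_natpow_mul hq]
    rw [show (l:ℝ) * ((j:ℝ) * ((x + S) / l)) = (j:ℝ)*x + (j:ℝ)*S by field_simp]
    rw [Real.rpow_add hq]
    congr 1
    refine Finset.prod_congr rfl fun t _ => ?_
    rw [rpow_natpow_mul hq]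
    rw [show (l:ℝ) * (((0:ℤ):ℝ) + (j:ℝ) - (t:ℝ)) = ((j:ℝ) - (t:ℝ)) * l by push_cast; ring]
  -- evaluate the big sum
  have hsum : (∑ i : Fin k → Fin l,
        q ^ (-(∑ j : Fin k, (j : ℝ) * ((i j : ℕ) : ℝ))) * (-1:ℝ) ^ (∑ j : Fin k, (i j : ℕ)) *
          qE (q ^ l) 0 k m ((x + ∑ j : Fin k, ((i j : ℕ) : ℝ)) / l))
      = ((1 + q ^ l) ^ k / (1 - q ^ l) ^ m) *
        ∑ j ∈ Finset.range (m+1),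
          (m.choose j : ℝ) * (-1:ℝ) ^ j * q ^ ((j:ℝ)*x) /
            ∏ t ∈ Finset.range k, (1 + q ^ ((j:ℝ) - (t:ℝ))) := by
    simp only [hqE]
    calc (∑ i : Fin k → Fin l,
          q ^ (-(∑ j : Fin k, (j : ℝ) * ((i j : ℕ) : ℝ))) * (-1:ℝ) ^ (∑ j : Fin k, (i j : ℕ)) *
            (((1 + q ^ l) ^ k / (1 - q ^ l) ^ m) *
              ∑ j ∈ Finset.range (m+1),
                (m.choose j : ℝ) * (-1:ℝ) ^ j *
                  (q ^ ((j:ℝ)*x) * q ^ ((j:ℝ) * ∑ t : Fin k, ((i t : ℕ) : ℝ))) /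
                  ∏ t ∈ Finset.range k, (1 + q ^ (((j:ℝ) - (t:ℝ)) * l))))
        = ∑ j ∈ Finset.range (m+1), ∑ i : Fin k → Fin l,
            ((1 + q ^ l) ^ k / (1 - q ^ l) ^ m) *
              ((m.choose j : ℝ) * (-1:ℝ) ^ j * q ^ ((j:ℝ)*x) /
                ∏ t ∈ Finset.range k, (1 + q ^ (((j:ℝ) - (t:ℝ)) * l))) *
              (q ^ (-(∑ t : Fin k, (t : ℝ) * ((i t : ℕ) : ℝ))) * (-1:ℝ) ^ (∑ t : Fin k, (i t : ℕ)) *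
                q ^ ((j:ℝ) * ∑ t : Fin k, ((i t : ℕ) : ℝ))) := by
          rw [Finset.sum_comm]
          refine Finset.sum_congr rfl fun i _ => ?_
          rw [Finset.mul_sum, Finset.mul_sum]
          refine Finset.sum_congr rfl fun j _ => ?_
          ring
      _ = ∑ j ∈ Finset.range (m+1),
            ((1 + q ^ l) ^ k / (1 - q ^ l) ^ m) *
              ((m.choose j : ℝ) * (-1:ℝ) ^ j * q ^ ((j:ℝ)*x) /
                ∏ t ∈ Finset.range k, (1 + q ^ (((j:ℝ) - (t:ℝ)) * l))) *
              ∏ t ∈ Finset.range k,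
                ((1 + q ^ (((j:ℝ) - (t:ℝ)) * l)) / (1 + q ^ ((j:ℝ) - (t:ℝ)))) := by
          refine Finset.sum_congr rfl fun j _ => ?_
          rw [← Finset.mul_sum, qEuler_inner_sum hq hodd k j]
      _ = ∑ j ∈ Finset.range (m+1),
            ((1 + q ^ l) ^ k / (1 - q ^ l) ^ m) *
              ((m.choose j : ℝ) * (-1:ℝ) ^ j * q ^ ((j:ℝ)*x) /
                ∏ t ∈ Finset.range k, (1 + q ^ ((j:ℝ) - (t:ℝ)))) := by
          refine Finset.sum_congr rfl fun j _ => ?_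
          rw [Finset.prod_div_distrib]
          have hP : (∏ t ∈ Finset.range k, (1 + q ^ (((j:ℝ) - (t:ℝ)) * l))) ≠ 0 :=
            Finset.prod_ne_zero_iff.mpr fun t _ => (hDpos _).ne'
          have hQ : (∏ t ∈ Finset.range k, (1 + q ^ ((j:ℝ) - (t:ℝ)))) ≠ 0 :=
            Finset.prod_ne_zero_iff.mpr fun t _ => (hDpos _).ne'
          field_simp
          ring
      _ = ((1 + q ^ l) ^ k / (1 - q ^ l) ^ m) *
          ∑ j ∈ Finset.range (m+1),
            (m.choose j : ℝ) * (-1:ℝ) ^ j * q ^ ((j:ℝ)*x) /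
              ∏ t ∈ Finset.range k, (1 + q ^ ((j:ℝ) - (t:ℝ))) := by
          rw [Finset.mul_sum]
  rw [qE, qNum, qNumNeg, Real.rpow_natCast, hodd.neg_pow, hsum]
  rw [show (1 - -q ^ l) = 1 + q ^ l by ring]
  rw [← mul_assoc]
  have hAB : ((1 - q ^ l) / (1 - q)) ^ m / ((1 + q ^ l) / (1 + q)) ^ k *
      ((1 + q ^ l) ^ k / (1 - q ^ l) ^ m) = (1 + q) ^ k / (1 - q) ^ m := by
    rw [div_pow, div_pow]
    have h1 : ((1:ℝ) + q ^ l) ^ k ≠ 0 := pow_ne_zero _ (by linarith)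
    have h2 : ((1:ℝ) - q ^ l) ^ m ≠ 0 := pow_ne_zero _ h1ql
    have h3 : ((1:ℝ) + q) ^ k ≠ 0 := pow_ne_zero _ (by linarith)
    have h4 : ((1:ℝ) - q) ^ m ≠ 0 := pow_ne_zero _ h1q
    field_simp
  rw [hAB]
  congr 1
  refine Finset.sum_congr rfl fun j _ => ?_
  norm_num
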